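/- arXiv:1201.4743 — 7 statements merged into one kernel-verified Lean document; each statement's English description precedes it below -/
import Mathlib

section
/- In a generalised voting game, if x_min is an O-minimal action and x_max is an O-maximal action for player i, then the criticality-δ increasingly and decreasingly critical sets are disjoint, and the probability of the criticality-δ totally critical set O_TC_i^δ := O_IC_i^δ ∪ O_DC_i^δ satisfies Pr(O_TC_i^δ) = Pr(O | x_max) − Pr(O | x_min). -/
/-! Since `update ω i (ω i) = ω`, minimality and maximality of the two actions give
`W (update ω i x_min) = O → W ω = O → W (update ω i x_max) = O`. Hence the totally critical set,
the union of the two disjoint critical sets, is exactly `{x_max wins} \ {x_min wins}`, and the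
first of these events contains the second, so its probability is the difference. -/

open MeasureTheory Function

section CriticalSets

variable {ι : Type*} [DecidableEq ι] {X : ι → Type*} {𝒪 : Type*}
  {W : (∀ j, X j) → 𝒪} {O : 𝒪} {i : ι}

lemma eq_of_update_minimal {x_min : X i}
    (hmin : ∀ ω : ∀ j, X j, W (update ω i x_min) = O → ∀ x : X i, W (update ω i x) = O)
    {ω : ∀ j, X j} (h : W (update ω i x_min) = O) : W ω = O := by
  simpa using hmin ω h (ω i)

lemma update_maximal_eq_of_eq {x_max : X i}
    (hmax : ∀ ω : ∀ j, X j, ∀ x : X i, W (update ω i x) = O → W (update ω i x_max) = O)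
    {ω : ∀ j, X j} (h : W ω = O) : W (update ω i x_max) = O :=
  hmax ω (ω i) (by simpa using h)

lemma criticalSets_union_eq_diff {x_min x_max : X i}
    (hmin : ∀ ω : ∀ j, X j, W (update ω i x_min) = O → ∀ x : X i, W (update ω i x) = O)
    (hmax : ∀ ω : ∀ j, X j, ∀ x : X i, W (update ω i x) = O → W (update ω i x_max) = O) :
    {ω | W ω ≠ O ∧ W (update ω i x_max) = O} ∪ {ω | W ω = O ∧ W (update ω i x_min) ≠ O} =
      {ω | W (update ω i x_max) = O} \ {ω | W (update ω i x_min) = O} := by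
  ext ω
  simp only [Set.mem_union, Set.mem_ofPred_eq, Set.mem_sdiff]
  constructor
  · rintro (⟨hω, hwin_max⟩ | ⟨hω, hlose_min⟩)
    · exact ⟨hwin_max, fun hwin_min => hω (eq_of_update_minimal hmin hwin_min)⟩
    · exact ⟨update_maximal_eq_of_eq hmax hω, hlose_min⟩
  · rintro ⟨hwin_max, hlose_min⟩
    by_cases hω : W ω = O
    · exact Or.inr ⟨hω, hlose_min⟩
    · exact Or.inl ⟨hω, hwin_max⟩

end CriticalSets

lemma measurableSet_setOf_update_eq {ι : Type*} [DecidableEq ι] {X : ι → Type*}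
    [∀ j, MeasurableSpace (X j)] {𝒪 : Type*} [MeasurableSpace 𝒪] [MeasurableSingletonClass 𝒪]
    {W : (∀ j, X j) → 𝒪} (hW : Measurable W) (O : 𝒪) (i : ι) (x : X i) :
    MeasurableSet {ω | W (update ω i x) = O} :=
  (hW.comp measurable_update_left) (measurableSet_singleton O)

theorem stmt_5_general
    {ι : Type*} [Fintype ι] [DecidableEq ι]
    {X : ι → Type*} [∀ j, MeasurableSpace (X j)]
    (μ : ∀ j, Measure (X j)) [∀ j, IsProbabilityMeasure (μ j)]
    {𝒪 : Type*} [MeasurableSpace 𝒪] [MeasurableSingletonClass 𝒪]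
    (W : (∀ j, X j) → 𝒪) (hW : Measurable W)
    (O : 𝒪) (i : ι)
    (x_min : X i)
    (hmin : ∀ ω : ∀ j, X j, W (update ω i x_min) = O →
      ∀ x : X i, W (update ω i x) = O)
    (x_max : X i)
    (hmax : ∀ ω : ∀ j, X j, ∀ x : X i, W (update ω i x) = O →
      W (update ω i x_max) = O)
    :
    Disjoint {ω | W ω ≠ O ∧ W (update ω i x_max) = O} {ω | W ω = O ∧ W (update ω i x_min) ≠ O} ∧
      Measure.pi μ ({ω | W ω ≠ O ∧ W (update ω i x_max) = O} ∪ {ω | W ω = O ∧ W (update ω i x_min) ≠ O}) =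
        Measure.pi μ {ω | W (update ω i x_max) = O} - Measure.pi μ {ω | W (update ω i x_min) = O} := by
  refine ⟨Set.disjoint_left.2 fun ω hinc hdec => hinc.1 hdec.1, ?_⟩
  rw [criticalSets_union_eq_diff hmin hmax]
  exact measure_sdiff (fun ω hwin_min => hmax ω x_min hwin_min)
    (measurableSet_setOf_update_eq hW O i x_min).nullMeasurableSet (measure_ne_top _ _)

theorem stmt_5
    {ι : Type*} [Fintype ι] [Nonempty ι] [DecidableEq ι]
    {X : ι → Type*} [∀ j, MeasurableSpace (X j)]
    (μ : ∀ j, Measure (X j)) [∀ j, IsProbabilityMeasure (μ j)]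
    {𝒪 : Type*} [MeasurableSpace 𝒪] [MeasurableSingletonClass 𝒪]
    (W : (∀ j, X j) → 𝒪) (hW : Measurable W)
    (O : 𝒪) (i : ι)
    (x_min : X i)
    (hmin : ∀ ω : ∀ j, X j, W (update ω i x_min) = O →
      ∀ x : X i, W (update ω i x) = O)
    (x_max : X i)
    (hmax : ∀ ω : ∀ j, X j, ∀ x : X i, W (update ω i x) = O →
      W (update ω i x_max) = O)
    :
    Disjoint {ω | W ω ≠ O ∧ W (update ω i x_max) = O} {ω | W ω = O ∧ W (update ω i x_min) ≠ O} ∧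
      Measure.pi μ ({ω | W ω ≠ O ∧ W (update ω i x_max) = O} ∪ {ω | W ω = O ∧ W (update ω i x_min) ≠ O}) =
        Measure.pi μ {ω | W (update ω i x_max) = O} - Measure.pi μ {ω | W (update ω i x_min) = O} :=
  stmt_5_general μ W hW O i x_min hmin x_max hmax
end

section
/- In a generalised voting game, suppose x_min is an O-minimal action and x_max is an O-maximal action for player i, singletons of X i are measurable, and (μ i) {x_min} ≠ 0. Then the conditional probability of player i being criticality-0 increasingly critical, given that player i plays x_min, satisfies Pr(O_IC_i^0 | {ω | ω i = x_min}) = Pr(O | x_max) − Pr(O | x_min), where the conditional probability is P(O_IC_i^0 ∩ {ω | ω i = x_min}) / P({ω | ω i = x_min}). -/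
open MeasureTheory Function

/-! Resampling one coordinate of a product probability measure preserves it, so an event that
does not look at `ω i` is independent of `{ω | ω i ∈ S}`. When `ω i = x_min`, player `i` is
increasingly critical exactly when `O` wins with `x_max` but not with `x_min` in its place, an
event that does not look at `ω i`; so conditioning on `ω i = x_min` does not change its
probability, and minimality of `x_min` turns that probability into the difference
`Pr(O | x_max) - Pr(O | x_min)`. -/

namespace MeasureTheory.Measure

variable {ι : Type*} [Fintype ι] [DecidableEq ι] {X : ι → Type*} [∀ j, MeasurableSpace (X j)]
  (μ : ∀ j, Measure (X j)) [∀ j, SigmaFinite (μ j)]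

theorem measurePreserving_update (i : ι) [IsProbabilityMeasure (μ i)] :
    MeasurePreserving (fun p : (∀ j, X j) × X i => update p.1 i p.2)
      ((Measure.pi μ).prod (μ i)) (Measure.pi μ) := by
  refine ⟨measurable_update', (pi_eq fun s hs => ?_).symm⟩
  have hpre : (fun p : (∀ j, X j) × X i => update p.1 i p.2) ⁻¹' Set.univ.pi s =
      Set.univ.pi (update s i Set.univ) ×ˢ s i := by
    ext ⟨ω, x⟩
    simp only [Set.mem_preimage, Set.mem_univ_pi, Set.mem_prod]
    refine ⟨fun h => ⟨fun j => ?_, by simpa using h i⟩, fun ⟨h, hx⟩ j => ?_⟩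
    all_goals rcases eq_or_ne j i with rfl | hj
    · simp
    · simpa [hj] using h j
    · simpa using hx
    · simpa [hj] using h j
  rw [map_apply measurable_update' (.univ_pi hs), hpre, prod_prod, pi_pi,
    ← Finset.prod_erase_mul _ _ (Finset.mem_univ i),
    ← Finset.prod_erase_mul _ _ (Finset.mem_univ i)]
  simp only [update_self, measure_univ, mul_one]
  congr 1
  exact Finset.prod_congr rfl fun j hj => by rw [update_of_ne (Finset.ne_of_mem_erase hj)]

theorem pi_eval_preimage_inter_of_update_mem_iff {i : ι} [IsProbabilityMeasure (μ i)]
    {S : Set (X i)} (hS : MeasurableSet S) {B : Set (∀ j, X j)} (hB : MeasurableSet B)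
    (hB_update : ∀ ω x, update ω i x ∈ B ↔ ω ∈ B) :
    Measure.pi μ ({ω | ω i ∈ S} ∩ B) = μ i S * Measure.pi μ B := by
  have hpre : (fun p : (∀ j, X j) × X i => update p.1 i p.2) ⁻¹' ({ω | ω i ∈ S} ∩ B) =
      B ×ˢ S := by
    ext ⟨ω, x⟩
    simp [hB_update, and_comm]
  have hmeas : MeasurableSet ({ω | ω i ∈ S} ∩ B) := (measurable_pi_apply i hS).inter hB
  rw [← (measurePreserving_update μ i).measure_preimage hmeas.nullMeasurableSet, hpre,
    prod_prod, mul_comm]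

end MeasureTheory.Measure

theorem stmt_7_general
    {ι : Type*} [Fintype ι] [DecidableEq ι]
    {X : ι → Type*} [∀ j, MeasurableSpace (X j)]
    (μ : ∀ j, Measure (X j)) [∀ j, IsProbabilityMeasure (μ j)]
    {𝒪 : Type*} [MeasurableSpace 𝒪] [MeasurableSingletonClass 𝒪]
    (W : (∀ j, X j) → 𝒪) (hW : Measurable W)
    (O : 𝒪) (i : ι)
    (x_min : X i)
    (hmin : ∀ ω : ∀ j, X j, W (update ω i x_min) = O →
      ∀ x : X i, W (update ω i x) = O)
    (x_max : X i)
    [MeasurableSingletonClass (X i)]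
    (hne : μ i {x_min} ≠ 0)
    :
    Measure.pi μ ({ω | ω i = x_min ∧ W ω ≠ O ∧ W (update ω i x_max) = O} ∩ {ω | ω i = x_min}) /
        Measure.pi μ {ω | ω i = x_min} =
      Measure.pi μ {ω | W (update ω i x_max) = O} - Measure.pi μ {ω | W (update ω i x_min) = O} := by
  set A : X i → Set (∀ j, X j) := fun x => {ω | W (update ω i x) = O}
  have hA : ∀ x, MeasurableSet (A x) := fun x =>
    (hW.comp measurable_update_left) (measurableSet_singleton O)
  have hIC : {ω | ω i = x_min ∧ W ω ≠ O ∧ W (update ω i x_max) = O} ∩ {ω | ω i = x_min} =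
      {ω | ω i ∈ ({x_min} : Set (X i))} ∩ (A x_max \ A x_min) := by
    have hfix : ∀ ω : ∀ j, X j, ω i = x_min → update ω i x_min = ω :=
      fun ω hi => update_eq_self_iff.2 hi.symm
    ext ω
    simp only [Set.mem_inter_iff, Set.mem_ofPred_eq, Set.mem_singleton_iff, Set.mem_sdiff, A]
    constructor
    · rintro ⟨⟨hi, hω, hmax⟩, -⟩
      exact ⟨hi, hmax, by rwa [hfix ω hi]⟩
    · rintro ⟨hi, hmax, hω⟩
      exact ⟨⟨hi, by rwa [hfix ω hi] at hω, hmax⟩, hi⟩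
  have hx_min : {ω : ∀ j, X j | ω i = x_min} = {ω | ω i ∈ ({x_min} : Set (X i))} ∩ Set.univ := by
    simp
  rw [hIC, hx_min, Measure.pi_eval_preimage_inter_of_update_mem_iff μ (measurableSet_singleton _)
      ((hA x_max).diff (hA x_min)) (by simp [A]),
    Measure.pi_eval_preimage_inter_of_update_mem_iff μ (measurableSet_singleton _) .univ (by simp),
    measure_univ, mul_one, mul_comm, ENNReal.mul_div_cancel_right hne (measure_ne_top _ _)]
  exact measure_sdiff (fun ω hω => hmin ω hω x_max) (hA x_min).nullMeasurableSet
    (measure_ne_top _ _)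

theorem stmt_7
    {ι : Type*} [Fintype ι] [Nonempty ι] [DecidableEq ι]
    {X : ι → Type*} [∀ j, MeasurableSpace (X j)]
    (μ : ∀ j, Measure (X j)) [∀ j, IsProbabilityMeasure (μ j)]
    {𝒪 : Type*} [MeasurableSpace 𝒪] [MeasurableSingletonClass 𝒪]
    (W : (∀ j, X j) → 𝒪) (hW : Measurable W)
    (O : 𝒪) (i : ι)
    (x_min : X i)
    (hmin : ∀ ω : ∀ j, X j, W (update ω i x_min) = O →
      ∀ x : X i, W (update ω i x) = O)
    (x_max : X i)
    (hmax : ∀ ω : ∀ j, X j, ∀ x : X i, W (update ω i x) = O →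
      W (update ω i x_max) = O)
    [MeasurableSingletonClass (X i)]
    (hne : μ i {x_min} ≠ 0)
    :
    Measure.pi μ ({ω | ω i = x_min ∧ W ω ≠ O ∧ W (update ω i x_max) = O} ∩ {ω | ω i = x_min}) /
        Measure.pi μ {ω | ω i = x_min} =
      Measure.pi μ {ω | W (update ω i x_max) = O} - Measure.pi μ {ω | W (update ω i x_min) = O} :=
  stmt_7_general μ W hW O i x_min hmin x_max hne
end

section
/- In a generalised voting game, if x_min is an O-minimal action and x_max is an O-maximal action for player i and singletons of X i are measurable, then the probability of the criticality-0 increasingly critical set satisfies Pr(O_IC_i^0) = (μ i){x_min} · (Pr(O | x_max) − Pr(O | x_min)). -/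
open MeasureTheory Function
open scoped ENNReal

/-!
On the critical set `ω i = x_min`, hence `W ω ≠ O` means `W (update ω i x_min) ≠ O`: the set is the
cylinder `{ω i = x_min}` intersected with an event that does not look at coordinate `i`. Under the
product measure these two are independent, and by maximality of `x_max` the second event is the
difference of the nested events `{W (update ω i x_max) = O} ⊇ {W (update ω i x_min) = O}`.
-/

namespace MeasureTheory

variable {ι : Type*} [Fintype ι] [DecidableEq ι] {X : ι → Type*} [∀ j, MeasurableSpace (X j)]
  (μ : ∀ j, Measure (X j)) [∀ j, SigmaFinite (μ j)]

theorem lintegral_pi_eq_lintegral_lintegral_update {f : (∀ j, X j) → ℝ≥0∞} (hf : Measurable f)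
    (i : ι) [IsProbabilityMeasure (μ i)] :
    ∫⁻ ω, f ω ∂Measure.pi μ = ∫⁻ ω, ∫⁻ x, f (update ω i x) ∂μ i ∂Measure.pi μ := by
  have hg : (fun ω ↦ ∫⁻ x, f (update ω i x) ∂μ i) = ∫⋯∫⁻_{i}, f ∂μ :=
    (lmarginal_singleton f i).symm
  refine lintegral_eq_of_lmarginal_eq {i} hf (hg ▸ hf.lmarginal μ) ?_
  rw [lmarginal_singleton, lmarginal_singleton]
  ext ω
  simp only [update_idem, lintegral_const, measure_univ, mul_one]

theorem measure_pi_eq_lintegral_measure_update {T : Set (∀ j, X j)} (hT : MeasurableSet T)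
    (i : ι) [IsProbabilityMeasure (μ i)] :
    Measure.pi μ T = ∫⁻ ω, μ i (update ω i ⁻¹' T) ∂Measure.pi μ := by
  rw [← lintegral_indicator_one hT,
    lintegral_pi_eq_lintegral_lintegral_update μ (measurable_one.indicator hT) i]
  congr 1 with ω
  rw [← lintegral_indicator_one (measurable_update ω hT)]
  rfl

theorem measure_pi_preimage_eval_inter {i : ι} {s : Set (X i)} (hs : MeasurableSet s)
    {A : Set (∀ j, X j)} (hA : MeasurableSet A) (hAi : ∀ ω x, update ω i x ∈ A ↔ ω ∈ A)
    [IsProbabilityMeasure (μ i)] :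
    Measure.pi μ (eval i ⁻¹' s ∩ A) = μ i s * Measure.pi μ A := by
  rw [measure_pi_eq_lintegral_measure_update μ ((measurable_pi_apply i hs).inter hA) i,
    ← lintegral_indicator_const hA]
  congr 1 with ω
  by_cases hω : ω ∈ A <;> simp [hω, Set.preimage, hAi]

end MeasureTheory

theorem stmt_8_general
    {ι : Type*} [Fintype ι] [DecidableEq ι]
    {X : ι → Type*} [∀ j, MeasurableSpace (X j)]
    (μ : ∀ j, Measure (X j)) [∀ j, IsProbabilityMeasure (μ j)]
    {𝒪 : Type*} [MeasurableSpace 𝒪] [MeasurableSingletonClass 𝒪]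
    (W : (∀ j, X j) → 𝒪) (hW : Measurable W)
    (O : 𝒪) (i : ι)
    (x_min : X i)
    (x_max : X i)
    (hmax : ∀ ω : ∀ j, X j, ∀ x : X i, W (update ω i x) = O →
      W (update ω i x_max) = O)
    [MeasurableSingletonClass (X i)]
    :
    Measure.pi μ {ω | ω i = x_min ∧ W ω ≠ O ∧ W (update ω i x_max) = O} =
      μ i {x_min} * (Measure.pi μ {ω | W (update ω i x_max) = O} - Measure.pi μ {ω | W (update ω i x_min) = O}) := by
  have hwin (x : X i) : MeasurableSet {ω | W (update ω i x) = O} :=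
    hW.comp measurable_update_left (measurableSet_singleton O)
  have hmono : {ω | W (update ω i x_min) = O} ⊆ {ω | W (update ω i x_max) = O} :=
    fun ω ↦ hmax ω x_min
  have hcritical : {ω | ω i = x_min ∧ W ω ≠ O ∧ W (update ω i x_max) = O} =
      eval i ⁻¹' {x_min} ∩
        ({ω | W (update ω i x_max) = O} \ {ω | W (update ω i x_min) = O}) := by
    ext ω
    simp only [Set.mem_ofPred_eq, Set.mem_inter_iff, Set.mem_preimage, Set.mem_singleton_iff,
      Set.mem_sdiff, eval]
    constructor
    · rintro ⟨rfl, hω, hmaxω⟩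
      exact ⟨rfl, hmaxω, by rwa [update_eq_self]⟩
    · rintro ⟨rfl, hmaxω, hω⟩
      exact ⟨rfl, by rwa [update_eq_self] at hω, hmaxω⟩
  rw [hcritical, measure_pi_preimage_eval_inter μ (measurableSet_singleton x_min)
    ((hwin x_max).diff (hwin x_min)) (by simp [update_idem]),
    measure_sdiff hmono (hwin x_min).nullMeasurableSet (measure_ne_top _ _)]

theorem stmt_8
    {ι : Type*} [Fintype ι] [Nonempty ι] [DecidableEq ι]
    {X : ι → Type*} [∀ j, MeasurableSpace (X j)]
    (μ : ∀ j, Measure (X j)) [∀ j, IsProbabilityMeasure (μ j)]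
    {𝒪 : Type*} [MeasurableSpace 𝒪] [MeasurableSingletonClass 𝒪]
    (W : (∀ j, X j) → 𝒪) (hW : Measurable W)
    (O : 𝒪) (i : ι)
    (x_min : X i)
    (hmin : ∀ ω : ∀ j, X j, W (update ω i x_min) = O →
      ∀ x : X i, W (update ω i x) = O)
    (x_max : X i)
    (hmax : ∀ ω : ∀ j, X j, ∀ x : X i, W (update ω i x) = O →
      W (update ω i x_max) = O)
    [MeasurableSingletonClass (X i)]
    :
    Measure.pi μ {ω | ω i = x_min ∧ W ω ≠ O ∧ W (update ω i x_max) = O} =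
      μ i {x_min} * (Measure.pi μ {ω | W (update ω i x_max) = O} - Measure.pi μ {ω | W (update ω i x_min) = O}) :=
  stmt_8_general μ W hW O i x_min x_max hmax
end

section
/- In a generalised voting game, if x_min is an O-minimal action and x_max is an O-maximal action for player i and singletons of X i are measurable, then the criticality-0 increasingly and decreasingly critical sets are disjoint, and the probability of the criticality-0 totally critical set O_TC_i^0 := O_IC_i^0 ∪ O_DC_i^0 satisfies Pr(O_TC_i^0) = (Pr(O) − Pr(O | x_min)) + (μ i){x_min} · (Pr(O | x_max) − Pr(O | x_min)). -/
open MeasureTheory Function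

/-!
The decreasingly critical set is `{W = O} \ {W (update · i x_min) = O}`, a difference of nested
events by minimality of `x_min`. Since `ω i = x_min` there, the increasingly critical set is
`{ω i = x_min}` intersected with `{W (update · i x_max) = O} \ {W (update · i x_min) = O}`; the
latter event does not depend on the `i`-th coordinate, so under the product measure its probability
factorizes, and it is again a difference of nested events, by maximality of `x_max`.
-/

theorem MeasureTheory.Measure.pi_preimage_eval_inter_of_update_mem_iff
    {ι : Type*} [Fintype ι] [DecidableEq ι] {X : ι → Type*} [∀ j, MeasurableSpace (X j)]
    (μ : ∀ j, Measure (X j)) [∀ j, SigmaFinite (μ j)] (i : ι) [IsProbabilityMeasure (μ i)]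
    {A : Set (X i)} (hA : MeasurableSet A) {B : Set (∀ j, X j)} (hB : MeasurableSet B)
    (hBi : ∀ (ω : ∀ j, X j) (x : X i), update ω i x ∈ B ↔ ω ∈ B) :
    Measure.pi μ (eval i ⁻¹' A ∩ B) = μ i A * Measure.pi μ B := by
  have hAB : MeasurableSet (eval i ⁻¹' A ∩ B) := (measurable_pi_apply i hA).inter hB
  have hB_update : ∀ (ω : ∀ j, X j) (x : X i),
      B.indicator (1 : (∀ j, X j) → ENNReal) (update ω i x) = B.indicator 1 ω := fun ω x => by
    by_cases hω : ω ∈ B <;> simp [hω, hBi]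
  have hAB_update : ∀ (ω : ∀ j, X j) (x : X i),
      (eval i ⁻¹' A ∩ B).indicator (1 : (∀ j, X j) → ENNReal) (update ω i x)
        = B.indicator 1 ω * A.indicator 1 x := by
    intro ω x
    rw [Set.inter_indicator_one, Pi.mul_apply, hB_update, mul_comm]
    by_cases hx : x ∈ A <;> simp [hx]
  have hmarginal : ∫⋯∫⁻_{i}, (eval i ⁻¹' A ∩ B).indicator 1 ∂μ
      = ∫⋯∫⁻_{i}, fun ω => μ i A * B.indicator 1 ω ∂μ := by
    rw [lmarginal_singleton, lmarginal_singleton]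
    funext ω
    simp only [hAB_update, hB_update]
    rw [lintegral_const_mul _ (measurable_one.indicator hA), lintegral_indicator_one hA,
      lintegral_const, measure_univ, mul_one, mul_comm]
  have hlintegral := lintegral_eq_of_lmarginal_eq {i} (measurable_one.indicator hAB)
    ((measurable_one.indicator hB).const_mul _) hmarginal
  rwa [lintegral_indicator_one hAB, lintegral_const_mul _ (measurable_one.indicator hB),
    lintegral_indicator_one hB] at hlintegral

theorem stmt_9_general
    {ι : Type*} [Fintype ι] [DecidableEq ι]
    {X : ι → Type*} [∀ j, MeasurableSpace (X j)]
    (μ : ∀ j, Measure (X j)) [∀ j, IsProbabilityMeasure (μ j)]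
    {𝒪 : Type*} [MeasurableSpace 𝒪] [MeasurableSingletonClass 𝒪]
    (W : (∀ j, X j) → 𝒪) (hW : Measurable W)
    (O : 𝒪) (i : ι)
    (x_min : X i)
    (hmin : ∀ ω : ∀ j, X j, W (update ω i x_min) = O →
      ∀ x : X i, W (update ω i x) = O)
    (x_max : X i)
    (hmax : ∀ ω : ∀ j, X j, ∀ x : X i, W (update ω i x) = O →
      W (update ω i x_max) = O)
    [MeasurableSingletonClass (X i)]
    :
    Disjoint {ω | ω i = x_min ∧ W ω ≠ O ∧ W (update ω i x_max) = O} {ω | W ω = O ∧ W (update ω i x_min) ≠ O} ∧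
      Measure.pi μ ({ω | ω i = x_min ∧ W ω ≠ O ∧ W (update ω i x_max) = O} ∪ {ω | W ω = O ∧ W (update ω i x_min) ≠ O}) =
        (Measure.pi μ {ω | W ω = O} - Measure.pi μ {ω | W (update ω i x_min) = O}) +
          μ i {x_min} * (Measure.pi μ {ω | W (update ω i x_max) = O} - Measure.pi μ {ω | W (update ω i x_min) = O}) := by
  set S := {ω | W ω = O}
  set Smin := {ω | W (update ω i x_min) = O}
  set Smax := {ω | W (update ω i x_max) = O}
  have hSmin : MeasurableSet Smin := hW.comp measurable_update_left (measurableSet_singleton O)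
  have hSmax : MeasurableSet Smax := hW.comp measurable_update_left (measurableSet_singleton O)
  have hSmin_S : Smin ⊆ S := fun ω hω => by simpa [S] using hmin ω hω (ω i)
  have hSmin_Smax : Smin ⊆ Smax := fun ω hω => hmax ω x_min hω
  have hIC : {ω | ω i = x_min ∧ W ω ≠ O ∧ W (update ω i x_max) = O}
      = eval i ⁻¹' {x_min} ∩ (Smax \ Smin) := by
    ext ω
    simp only [Set.mem_ofPred_eq, Set.mem_inter_iff, Set.mem_preimage, Set.mem_singleton_iff,
      Set.mem_sdiff, eval, Smin, Smax]
    constructor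
    · rintro ⟨rfl, hω, hωmax⟩
      exact ⟨rfl, hωmax, by simpa using hω⟩
    · rintro ⟨rfl, hωmax, hω⟩
      exact ⟨rfl, by simpa using hω, hωmax⟩
  have hdisj : Disjoint {ω | ω i = x_min ∧ W ω ≠ O ∧ W (update ω i x_max) = O}
      {ω | W ω = O ∧ W (update ω i x_min) ≠ O} :=
    Set.disjoint_left.2 fun _ hIC hDC => hIC.2.1 hDC.1
  refine ⟨hdisj, ?_⟩
  rw [measure_union hdisj ((hW (measurableSet_singleton O)).diff hSmin), hIC,
    Measure.pi_preimage_eval_inter_of_update_mem_iff μ i (measurableSet_singleton x_min)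
      (hSmax.diff hSmin) (fun ω x => by simp [Smin, Smax]),
    measure_sdiff hSmin_Smax hSmin.nullMeasurableSet (measure_ne_top _ _),
    show {ω | W ω = O ∧ W (update ω i x_min) ≠ O} = S \ Smin from rfl,
    measure_sdiff hSmin_S hSmin.nullMeasurableSet (measure_ne_top _ _), add_comm]

theorem stmt_9
    {ι : Type*} [Fintype ι] [Nonempty ι] [DecidableEq ι]
    {X : ι → Type*} [∀ j, MeasurableSpace (X j)]
    (μ : ∀ j, Measure (X j)) [∀ j, IsProbabilityMeasure (μ j)]
    {𝒪 : Type*} [MeasurableSpace 𝒪] [MeasurableSingletonClass 𝒪]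
    (W : (∀ j, X j) → 𝒪) (hW : Measurable W)
    (O : 𝒪) (i : ι)
    (x_min : X i)
    (hmin : ∀ ω : ∀ j, X j, W (update ω i x_min) = O →
      ∀ x : X i, W (update ω i x) = O)
    (x_max : X i)
    (hmax : ∀ ω : ∀ j, X j, ∀ x : X i, W (update ω i x) = O →
      W (update ω i x_max) = O)
    [MeasurableSingletonClass (X i)]
    :
    Disjoint {ω | ω i = x_min ∧ W ω ≠ O ∧ W (update ω i x_max) = O} {ω | W ω = O ∧ W (update ω i x_min) ≠ O} ∧
      Measure.pi μ ({ω | ω i = x_min ∧ W ω ≠ O ∧ W (update ω i x_max) = O} ∪ {ω | W ω = O ∧ W (update ω i x_min) ≠ O}) =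
        (Measure.pi μ {ω | W ω = O} - Measure.pi μ {ω | W (update ω i x_min) = O}) +
          μ i {x_min} * (Measure.pi μ {ω | W (update ω i x_max) = O} - Measure.pi μ {ω | W (update ω i x_min) = O}) :=
  stmt_9_general μ W hW O i x_min hmin x_max hmax
end

section
/- In a generalised voting game, suppose x_max is an O-maximal action for player i and Pr(O) ≠ 1. Then the Coleman power-to-initiate-action measure, i.e. the conditional probability that player i is criticality-δ increasingly critical given that the outcome is not O, satisfies Pr(O_IC_i^δ | {ω | W(ω) ≠ O}) = (Pr(O | x_max) − Pr(O)) / (1 − Pr(O)). -/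
open MeasureTheory Function

lemma measure_diff_div_measure_compl {α : Type*} [MeasurableSpace α] (P : Measure α)
    [IsProbabilityMeasure P] {A B : Set α} (hA : MeasurableSet A) (hAB : A ⊆ B) :
    P (B \ A) / P Aᶜ = (P B - P A) / (1 - P A) := by
  rw [measure_sdiff hAB hA.nullMeasurableSet (measure_ne_top P A), prob_compl_eq_one_sub hA]

lemma setOf_eq_subset_setOf_update_eq {ι : Type*} [DecidableEq ι] {X : ι → Type*} {𝒪 : Type*}
    {W : (∀ j, X j) → 𝒪} {O : 𝒪} {i : ι} {x_max : X i}
    (hmax : ∀ ω : ∀ j, X j, ∀ x : X i, W (update ω i x) = O → W (update ω i x_max) = O) :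
    {ω | W ω = O} ⊆ {ω | W (update ω i x_max) = O} :=
  fun ω hω => hmax ω (ω i) (by rwa [update_eq_self])

theorem stmt_10_general
    {ι : Type*} [Fintype ι] [DecidableEq ι]
    {X : ι → Type*} [∀ j, MeasurableSpace (X j)]
    (μ : ∀ j, Measure (X j)) [∀ j, IsProbabilityMeasure (μ j)]
    {𝒪 : Type*} [MeasurableSpace 𝒪] [MeasurableSingletonClass 𝒪]
    (W : (∀ j, X j) → 𝒪) (hW : Measurable W)
    (O : 𝒪) (i : ι)
    (x_max : X i)
    (hmax : ∀ ω : ∀ j, X j, ∀ x : X i, W (update ω i x) = O →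
      W (update ω i x_max) = O)
    :
    Measure.pi μ ({ω | W ω ≠ O ∧ W (update ω i x_max) = O} ∩ {ω | W ω ≠ O}) /
        Measure.pi μ {ω | W ω ≠ O} =
      (Measure.pi μ {ω | W (update ω i x_max) = O} - Measure.pi μ {ω | W ω = O}) / (1 - Measure.pi μ {ω | W ω = O}) := by
  have hcritical : {ω | W ω ≠ O ∧ W (update ω i x_max) = O} ∩ {ω | W ω ≠ O} =
      {ω | W (update ω i x_max) = O} \ {ω | W ω = O} := by
    ext ω
    simp only [Set.mem_inter_iff, Set.mem_sdiff, Set.mem_ofPred_eq]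
    tauto
  rw [hcritical]
  exact measure_diff_div_measure_compl _ (hW (measurableSet_singleton O))
    (setOf_eq_subset_setOf_update_eq hmax)

theorem stmt_10
    {ι : Type*} [Fintype ι] [Nonempty ι] [DecidableEq ι]
    {X : ι → Type*} [∀ j, MeasurableSpace (X j)]
    (μ : ∀ j, Measure (X j)) [∀ j, IsProbabilityMeasure (μ j)]
    {𝒪 : Type*} [MeasurableSpace 𝒪] [MeasurableSingletonClass 𝒪]
    (W : (∀ j, X j) → 𝒪) (hW : Measurable W)
    (O : 𝒪) (i : ι)
    (x_max : X i)
    (hmax : ∀ ω : ∀ j, X j, ∀ x : X i, W (update ω i x) = O →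
      W (update ω i x_max) = O)
    (hne : Measure.pi μ {ω | W ω = O} ≠ 1)
    :
    Measure.pi μ ({ω | W ω ≠ O ∧ W (update ω i x_max) = O} ∩ {ω | W ω ≠ O}) /
        Measure.pi μ {ω | W ω ≠ O} =
      (Measure.pi μ {ω | W (update ω i x_max) = O} - Measure.pi μ {ω | W ω = O}) / (1 - Measure.pi μ {ω | W ω = O}) :=
  stmt_10_general μ W hW O i x_max hmax
end

section
/- In a generalised voting game, suppose x_min is an O-minimal action for player i and Pr(O) ≠ 0. Then the Coleman power-to-prevent-action measure, i.e. the conditional probability that player i is criticality-δ decreasingly critical given that the outcome is O, satisfies Pr(O_DC_i^δ | {ω | W(ω) = O}) = (Pr(O) − Pr(O | x_min)) / Pr(O). -/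
open MeasureTheory Function

lemma setOf_update_eq_subset_setOf_eq {ι : Type*} [DecidableEq ι] {X : ι → Type*} {α : Type*}
    {W : (∀ j, X j) → α} {O : α} {i : ι} {x : X i}
    (hmin : ∀ ω : ∀ j, X j, W (update ω i x) = O → ∀ y : X i, W (update ω i y) = O) :
    {ω | W (update ω i x) = O} ⊆ {ω | W ω = O} := fun ω hω =>
  update_eq_self i ω ▸ hmin ω hω (ω i)

theorem stmt_11_general
    {ι : Type*} [Fintype ι] [DecidableEq ι]
    {X : ι → Type*} [∀ j, MeasurableSpace (X j)]
    (μ : ∀ j, Measure (X j)) [∀ j, IsProbabilityMeasure (μ j)]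
    {𝒪 : Type*} [MeasurableSpace 𝒪] [MeasurableSingletonClass 𝒪]
    (W : (∀ j, X j) → 𝒪) (hW : Measurable W)
    (O : 𝒪) (i : ι)
    (x_min : X i)
    (hmin : ∀ ω : ∀ j, X j, W (update ω i x_min) = O →
      ∀ x : X i, W (update ω i x) = O)
    :
    Measure.pi μ ({ω | W ω = O ∧ W (update ω i x_min) ≠ O} ∩ {ω | W ω = O}) /
        Measure.pi μ {ω | W ω = O} =
      (Measure.pi μ {ω | W ω = O} - Measure.pi μ {ω | W (update ω i x_min) = O}) / Measure.pi μ {ω | W ω = O} := by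
  have hcritical : {ω | W ω = O ∧ W (update ω i x_min) ≠ O} ∩ {ω | W ω = O} =
      {ω | W ω = O} \ {ω | W (update ω i x_min) = O} := by
    ext ω
    simp only [Set.mem_inter_iff, Set.mem_sdiff, Set.mem_ofPred_eq]
    tauto
  have hmeas : MeasurableSet {ω : ∀ j, X j | W (update ω i x_min) = O} :=
    (hW.comp measurable_update_left) (measurableSet_singleton O)
  rw [hcritical, measure_sdiff (setOf_update_eq_subset_setOf_eq hmin) hmeas.nullMeasurableSet
    (measure_ne_top _ _)]

theorem stmt_11
    {ι : Type*} [Fintype ι] [Nonempty ι] [DecidableEq ι]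
    {X : ι → Type*} [∀ j, MeasurableSpace (X j)]
    (μ : ∀ j, Measure (X j)) [∀ j, IsProbabilityMeasure (μ j)]
    {𝒪 : Type*} [MeasurableSpace 𝒪] [MeasurableSingletonClass 𝒪]
    (W : (∀ j, X j) → 𝒪) (hW : Measurable W)
    (O : 𝒪) (i : ι)
    (x_min : X i)
    (hmin : ∀ ω : ∀ j, X j, W (update ω i x_min) = O →
      ∀ x : X i, W (update ω i x) = O)
    (hne : Measure.pi μ {ω | W ω = O} ≠ 0)
    :
    Measure.pi μ ({ω | W ω = O ∧ W (update ω i x_min) ≠ O} ∩ {ω | W ω = O}) /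
        Measure.pi μ {ω | W ω = O} =
      (Measure.pi μ {ω | W ω = O} - Measure.pi μ {ω | W (update ω i x_min) = O}) / Measure.pi μ {ω | W ω = O} :=
  stmt_11_general μ W hW O i x_min hmin
end

section
/- In a generalised voting game, suppose x_min is an O-minimal action and x_max is an O-maximal action for player i, and singletons of X i are measurable. If (μ i){x_min} = 0 while Pr(O | x_max) − Pr(O | x_min) > 0, then the Shapley–Shubik value Pr(O_IC_i^0) is 0 while the Banzhaf value Pr(O_TC_i^δ) = Pr(O | x_max) − Pr(O | x_min) is positive; in particular the Shapley–Shubik index Pr(O_IC_i^0) and the Banzhaf measure Pr(O_TC_i^δ) are not equal. -/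
/-!
Minimality of `x_min` and maximality of `x_max` make the events
`{W (update ω i x_min) = O} ⊆ {W ω = O} ⊆ {W (update ω i x_max) = O}` nested, so the totally
critical set is exactly the difference of the outer and inner events and its probability is
`Pr(O | x_max) - Pr(O | x_min)`. The increasingly critical set at criticality `0` forces
`ω i = x_min`, an event of probability `μ i {x_min} = 0` under the product measure.
-/

open MeasureTheory Function

section Actions

variable {ι : Type*} [DecidableEq ι] {X : ι → Type*} {𝒪 : Type*}

def IsMinimalAction (W : (∀ j, X j) → 𝒪) (O : 𝒪) (i : ι) (x_min : X i) : Prop :=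
  ∀ ω : ∀ j, X j, W (update ω i x_min) = O → ∀ x : X i, W (update ω i x) = O

def IsMaximalAction (W : (∀ j, X j) → 𝒪) (O : 𝒪) (i : ι) (x_max : X i) : Prop :=
  ∀ ω : ∀ j, X j, ∀ x : X i, W (update ω i x) = O → W (update ω i x_max) = O

variable {W : (∀ j, X j) → 𝒪} {O : 𝒪} {i : ι}

theorem IsMinimalAction.eq_of_update_eq {x_min : X i} (h : IsMinimalAction W O i x_min)
    {ω : ∀ j, X j} (hω : W (update ω i x_min) = O) : W ω = O := by
  simpa only [update_eq_self] using h ω hω (ω i)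

theorem IsMaximalAction.update_eq_of_eq {x_max : X i} (h : IsMaximalAction W O i x_max)
    {ω : ∀ j, X j} (hω : W ω = O) : W (update ω i x_max) = O :=
  h ω (ω i) (by rwa [update_eq_self])

theorem totallyCritical_eq_diff {x_min x_max : X i} (hmin : IsMinimalAction W O i x_min)
    (hmax : IsMaximalAction W O i x_max) :
    {ω | W ω ≠ O ∧ W (update ω i x_max) = O} ∪ {ω | W ω = O ∧ W (update ω i x_min) ≠ O} =
      {ω | W (update ω i x_max) = O} \ {ω | W (update ω i x_min) = O} := by
  ext ω
  constructor
  · rintro (⟨hne, hup⟩ | ⟨heq, hne⟩)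
    · exact ⟨hup, fun hlow => hne (hmin.eq_of_update_eq hlow)⟩
    · exact ⟨hmax.update_eq_of_eq heq, hne⟩
  · rintro ⟨hup, hlow⟩
    by_cases h : W ω = O
    · exact Or.inr ⟨h, hlow⟩
    · exact Or.inl ⟨h, hup⟩

end Actions

section Measure

variable {ι : Type*} [Fintype ι] [DecidableEq ι] {X : ι → Type*} [∀ j, MeasurableSpace (X j)]
  (μ : ∀ j, Measure (X j))

theorem measure_pi_increasinglyCritical_eq_zero [∀ j, SigmaFinite (μ j)] {𝒪 : Type*} (W : (∀ j, X j) → 𝒪) (O : 𝒪)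
    {i : ι} {x_min x_max : X i} (h0 : μ i {x_min} = 0) :
    Measure.pi μ {ω | ω i = x_min ∧ W ω ≠ O ∧ W (update ω i x_max) = O} = 0 :=
  measure_mono_null (fun _ hω => hω.1) (Measure.pi_eval_preimage_null μ h0)

theorem measure_pi_totallyCritical [∀ j, IsFiniteMeasure (μ j)]
    {𝒪 : Type*} [MeasurableSpace 𝒪] [MeasurableSingletonClass 𝒪]
    {W : (∀ j, X j) → 𝒪} (hW : Measurable W) {O : 𝒪} {i : ι} {x_min x_max : X i}
    (hmin : IsMinimalAction W O i x_min) (hmax : IsMaximalAction W O i x_max) :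
    Measure.pi μ ({ω | W ω ≠ O ∧ W (update ω i x_max) = O} ∪
        {ω | W ω = O ∧ W (update ω i x_min) ≠ O}) =
      Measure.pi μ {ω | W (update ω i x_max) = O} -
        Measure.pi μ {ω | W (update ω i x_min) = O} := by
  have hsub : {ω | W (update ω i x_min) = O} ⊆ {ω | W (update ω i x_max) = O} :=
    fun _ hω => hmax.update_eq_of_eq (hmin.eq_of_update_eq hω)
  have hmeas : MeasurableSet {ω : ∀ j, X j | W (update ω i x_min) = O} :=
    (hW.comp measurable_update_left) (measurableSet_singleton O)
  rw [totallyCritical_eq_diff hmin hmax,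
    measure_sdiff hsub hmeas.nullMeasurableSet (measure_ne_top _ _)]

end Measure

theorem stmt_14_general
    {ι : Type*} [Fintype ι] [DecidableEq ι]
    {X : ι → Type*} [∀ j, MeasurableSpace (X j)]
    (μ : ∀ j, Measure (X j)) [∀ j, IsProbabilityMeasure (μ j)]
    {𝒪 : Type*} [MeasurableSpace 𝒪] [MeasurableSingletonClass 𝒪]
    (W : (∀ j, X j) → 𝒪) (hW : Measurable W)
    (O : 𝒪) (i : ι)
    (x_min : X i)
    (hmin : ∀ ω : ∀ j, X j, W (update ω i x_min) = O →
      ∀ x : X i, W (update ω i x) = O)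
    (x_max : X i)
    (hmax : ∀ ω : ∀ j, X j, ∀ x : X i, W (update ω i x) = O →
      W (update ω i x_max) = O)
    (h0 : μ i {x_min} = 0)
    (hpos : 0 < Measure.pi μ {ω | W (update ω i x_max) = O} - Measure.pi μ {ω | W (update ω i x_min) = O})
    :
    Measure.pi μ {ω | ω i = x_min ∧ W ω ≠ O ∧ W (update ω i x_max) = O} = 0 ∧
      Measure.pi μ ({ω | W ω ≠ O ∧ W (update ω i x_max) = O} ∪ {ω | W ω = O ∧ W (update ω i x_min) ≠ O}) =
        Measure.pi μ {ω | W (update ω i x_max) = O} - Measure.pi μ {ω | W (update ω i x_min) = O} ∧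
      0 < Measure.pi μ ({ω | W ω ≠ O ∧ W (update ω i x_max) = O} ∪ {ω | W ω = O ∧ W (update ω i x_min) ≠ O}) ∧
      Measure.pi μ {ω | ω i = x_min ∧ W ω ≠ O ∧ W (update ω i x_max) = O} ≠
        Measure.pi μ ({ω | W ω ≠ O ∧ W (update ω i x_max) = O} ∪ {ω | W ω = O ∧ W (update ω i x_min) ≠ O}) := by
  have hIC := measure_pi_increasinglyCritical_eq_zero μ W O (x_max := x_max) h0
  have hTC := measure_pi_totallyCritical μ hW hmin hmax
  refine ⟨hIC, hTC, hTC ▸ hpos, ?_⟩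
  rw [hIC, hTC]
  exact hpos.ne

theorem stmt_14
    {ι : Type*} [Fintype ι] [Nonempty ι] [DecidableEq ι]
    {X : ι → Type*} [∀ j, MeasurableSpace (X j)]
    (μ : ∀ j, Measure (X j)) [∀ j, IsProbabilityMeasure (μ j)]
    {𝒪 : Type*} [MeasurableSpace 𝒪] [MeasurableSingletonClass 𝒪]
    (W : (∀ j, X j) → 𝒪) (hW : Measurable W)
    (O : 𝒪) (i : ι)
    (x_min : X i)
    (hmin : ∀ ω : ∀ j, X j, W (update ω i x_min) = O →
      ∀ x : X i, W (update ω i x) = O)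
    (x_max : X i)
    (hmax : ∀ ω : ∀ j, X j, ∀ x : X i, W (update ω i x) = O →
      W (update ω i x_max) = O)
    [MeasurableSingletonClass (X i)]
    (h0 : μ i {x_min} = 0)
    (hpos : 0 < Measure.pi μ {ω | W (update ω i x_max) = O} - Measure.pi μ {ω | W (update ω i x_min) = O})
    :
    Measure.pi μ {ω | ω i = x_min ∧ W ω ≠ O ∧ W (update ω i x_max) = O} = 0 ∧
      Measure.pi μ ({ω | W ω ≠ O ∧ W (update ω i x_max) = O} ∪ {ω | W ω = O ∧ W (update ω i x_min) ≠ O}) =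
        Measure.pi μ {ω | W (update ω i x_max) = O} - Measure.pi μ {ω | W (update ω i x_min) = O} ∧
      0 < Measure.pi μ ({ω | W ω ≠ O ∧ W (update ω i x_max) = O} ∪ {ω | W ω = O ∧ W (update ω i x_min) ≠ O}) ∧
      Measure.pi μ {ω | ω i = x_min ∧ W ω ≠ O ∧ W (update ω i x_max) = O} ≠
        Measure.pi μ ({ω | W ω ≠ O ∧ W (update ω i x_max) = O} ∪ {ω | W ω = O ∧ W (update ω i x_min) ≠ O}) :=
  stmt_14_general μ W hW O i x_min hmin x_max hmax h0 hpos
end
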